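/- Let R be a commutative ℂ-algebra, let f, φ₁, …, φ_k ∈ R and set I = (φ₁,…,φ_k). Let Der(R) be the R-module of ℂ-linear derivations of R, and let N ⊆ R^{k+1} be the image of the R-linear map Der(R) → R^{k+1} given by δ ↦ (δ(f), δ(φ₁), …, δ(φ_k)). Assume that φ₁, …, φ_k is a regular sequence on the R-module R^{k+1}/N. Then every derivation ξ ∈ Der(R) satisfying ξ(f) ∈ I and ξ(φᵢ) ∈ I for all i = 1,…,k belongs to Θ^T := {η ∈ Der(R) : η(φ₁) = ⋯ = η(φ_k) = 0} + I·Der(R). -/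

import Mathlib

/-! If `φ₁, …, φ_k` is weakly regular on `M ⧸ N` and `I = (φ₁, …, φ_k)`, then `I M ∩ N = I N`:
for one element this is the regularity of `φ₁` on `M ⧸ N`, and the induction step applies the
induction hypothesis to `N + φ₁ M` and concludes by the modular law.

Take `M = R^{k+1}` and `N` the image of `Φ : δ ↦ (δ f, δ φ₁, …, δ φ_k)`. All entries of `Φ ξ`
lie in `I`, so `Φ ξ ∈ I M ∩ N = I N = Φ (I · Der R)`. Hence `ξ - θ ∈ ker Φ` for some
`θ ∈ I · Der R`, and a derivation in `ker Φ` kills every `φᵢ`. -/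

/-- Evaluation of a `ℂ`-linear derivation of `R` at an element `x : R`,
as an `R`-linear map `Der(R) → R`. -/
def derEval (R : Type) [CommRing R] [Algebra ℂ R] (x : R) :
    Derivation ℂ R R →ₗ[R] R where
  toFun δ := δ x
  map_add' _ _ := rfl
  map_smul' _ _ := rfl

open Pointwise RingTheory.Sequence

theorem Ideal.ofList_ofFn {R : Type*} [Semiring R] {n : ℕ} (φ : Fin n → R) :
    Ideal.ofList (List.ofFn φ) = Ideal.span (Set.range φ) := by
  simp only [Ideal.ofList, List.mem_ofFn, Set.range]

namespace Submodule

theorem mem_smul_top_pi_of_forall_mem {R ι : Type*} [CommSemiring R] [Finite ι] {I : Ideal R}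
    {v : ι → R} (hv : ∀ i, v i ∈ I) : v ∈ I • (⊤ : Submodule R (ι → R)) := by
  have := Fintype.ofFinite ι
  classical
  rw [pi_eq_sum_univ v]
  exact sum_mem fun i _ => smul_mem_smul (hv i) mem_top

variable {R M : Type*} [CommRing R] [AddCommGroup M] [Module R M]

def quotSMulTopEquivQuotSup (N : Submodule R M) (r : R) :
    QuotSMulTop r (M ⧸ N) ≃ₗ[R] M ⧸ (N ⊔ r • ⊤) :=
  quotEquivOfEq _ _ (by rw [map_pointwise_smul, map_top, range_mkQ]) ≪≫ₗ
    quotientQuotientEquivQuotientSup N (r • ⊤)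

theorem ofList_smul_top_inf_le_of_isWeaklyRegular {rs : List R} {N : Submodule R M}
    (hreg : IsWeaklyRegular (M ⧸ N) rs) : Ideal.ofList rs • ⊤ ⊓ N ≤ Ideal.ofList rs • N := by
  induction rs generalizing N with
  | nil => simp
  | cons r rs ih =>
    rw [isWeaklyRegular_cons_iff] at hreg
    set J := Ideal.ofList rs
    set N' := N ⊔ r • (⊤ : Submodule R M)
    have hN' : J • ⊤ ⊓ N' ≤ J • N' :=
      ih (((quotSMulTopEquivQuotSup N r).isWeaklyRegular_congr rs).mp hreg.2)
    calc Ideal.ofList (r :: rs) • ⊤ ⊓ N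
        = (r • ⊤ ⊔ J • ⊤ ⊓ N') ⊓ N := by
          rw [Ideal.ofList_cons_smul, ← sup_inf_assoc_of_le _ (le_sup_right : r • ⊤ ≤ N'),
            inf_assoc, inf_eq_right.mpr (le_sup_left : N ≤ N')]
      _ ≤ (r • ⊤ ⊔ J • N) ⊓ N := by
          refine inf_le_inf_right _ (sup_le le_sup_left ?_)
          calc J • ⊤ ⊓ N' ≤ J • N ⊔ J • (r • ⊤) := smul_sup J N _ ▸ hN'
            _ ≤ r • ⊤ ⊔ J • N := sup_le le_sup_right (le_sup_of_le_left smul_le_right)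
      _ = r • ⊤ ⊓ N ⊔ J • N := by
          rw [inf_comm, ← inf_sup_assoc_of_le _ smul_le_right, inf_comm]
      _ ≤ r • N ⊔ J • N :=
          sup_le_sup_right (smul_top_inf_eq_smul_of_isSMulRegular_on_quot hreg.1) _
      _ = Ideal.ofList (r :: rs) • N := (Ideal.ofList_cons_smul r rs N).symm

end Submodule

/-- **Theorem (logarithmic vector fields mapping into the ideal are trivial).**
Let `R` be a commutative `ℂ`-algebra, `f, φ₁, …, φ_k ∈ R`, `I = (φ₁,…,φ_k)`,
and let `N ⊆ R^{k+1}` be the image of `Der(R) → R^{k+1}`,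
`δ ↦ (δ f, δ φ₁, …, δ φ_k)`. If `φ₁, …, φ_k` is a regular sequence on
`R^{k+1}/N`, then every derivation `ξ` with `ξ f ∈ I` and `ξ φᵢ ∈ I` for all
`i` lies in `Θᵀ = {η : η φ₁ = ⋯ = η φ_k = 0} + I·Der(R)`. -/
theorem derivation_mem_trivial_of_maps_into_ideal
    (R : Type) [CommRing R] [Algebra ℂ R] (k : ℕ) (f : R) (φ : Fin k → R)
    (I : Ideal R) (hI : I = Ideal.span (Set.range φ))
    (N : Submodule R (Fin (k + 1) → R))
    (hN : N = LinearMap.range (LinearMap.pi fun i => derEval R ((Fin.cons f φ : Fin (k + 1) → R) i)))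
    (hreg : RingTheory.Sequence.IsRegular ((Fin (k + 1) → R) ⧸ N) (List.ofFn φ))
    (ξ : Derivation ℂ R R) (hf : ξ f ∈ I) (hφ : ∀ i, ξ (φ i) ∈ I) :
    ξ ∈ (⨅ i, LinearMap.ker (derEval R (φ i))) ⊔
        I • (⊤ : Submodule R (Derivation ℂ R R)) := by
  set Φ := LinearMap.pi fun i => derEval R ((Fin.cons f φ : Fin (k + 1) → R) i)
  have hΦξ : Φ ξ ∈ I • (⊤ : Submodule R _) :=
    Submodule.mem_smul_top_pi_of_forall_mem fun i => Fin.cases hf hφ i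
  have hΦξN : Φ ξ ∈ I • N := by
    rw [hI, ← Ideal.ofList_ofFn] at hΦξ ⊢
    exact Submodule.ofList_smul_top_inf_le_of_isWeaklyRegular hreg.toIsWeaklyRegular
      ⟨hΦξ, hN ▸ ⟨ξ, rfl⟩⟩
  rw [hN, LinearMap.range_eq_map, ← Submodule.map_smul''] at hΦξN
  obtain ⟨θ, hθ, hΦθ⟩ := hΦξN
  have hker : ξ - θ ∈ LinearMap.ker Φ := by simp [hΦθ]
  rw [LinearMap.ker_pi, Submodule.mem_iInf] at hker
  have hφker : ξ - θ ∈ ⨅ i, LinearMap.ker (derEval R (φ i)) :=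
    Submodule.mem_iInf _ |>.mpr fun i => by simpa using hker i.succ
  simpa using Submodule.add_mem_sup hφker hθ
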